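/- arXiv:2405.03468 — 2 statements merged into one kernel-verified Lean document; each statement's English description precedes it below -/
import Mathlib

section
/- Translation-averaging reduces KL divergence (Proposition 3.2): let p be a probability density on ℝ^{G} invariant under all translations T_τ, τ ∈ G, of a finite abelian group G. If q = Z^{-1} e^{-U} and q̃ = Z̃^{-1} e^{-Ave U} where (Ave U)(φ) = |G|^{-1} ∑_{τ∈G} U(T_τ φ), then KL(p‖q̃) ≤ KL(p‖q). -/
/-!
Write `Ave f(φ) = |G|⁻¹ ∑_τ f(T_τ φ)`. For Gibbs densities `q ∝ e^{-U}` and `q̃ ∝ e^{-Ave U}`,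
`KL(p‖q) - KL(p‖q̃) = ∫ p (U - Ave U) + log (Z / Z̃)`. Since `p` and `Ave U` are translation
invariant and Lebesgue measure is too, averaging the integrand over `G` shows that the first term
vanishes. Jensen's inequality for `exp` gives `e^{-Ave U} ≤ Ave e^{-U}`, and integrating,
`Z̃ ≤ Z`, so the second term is nonnegative.
-/

open MeasureTheory

noncomputable section

abbrev E' (ι : Type) [Fintype ι] : Type := EuclideanSpace ℝ ι

def toE {ι : Type} [Fintype ι] (x : ι → ℝ) : E' ι := WithLp.toLp 2 x

noncomputable def KL' {ι : Type} [Fintype ι] (q p : E' ι → ℝ) : ℝ :=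
  ∫ x, q x * Real.log (q x / p x)

def IsDensity' {ι : Type} [Fintype ι] (p : E' ι → ℝ) : Prop :=
  (∀ x, 0 ≤ p x) ∧ Measurable p ∧ (∫ x, p x) = 1

/-- Translation of a field over a finite abelian group. -/
def translateField {G : Type} [Fintype G] [AddCommGroup G] (τ : G) (φ : E' G) : E' G :=
  toE fun n => φ (n - τ)

section OrbitAverage

variable {G α : Type*} [AddGroup G] [AddAction G α]

lemma MeasureTheory.Integrable.comp_vadd {E : Type*} [NormedAddCommGroup E] [MeasurableSpace α]
    [MeasurableConstVAdd G α] {μ : Measure α} [VAddInvariantMeasure G α μ] {f : α → E}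
    (hf : Integrable f μ) (g : G) :
    Integrable (fun x => f (g +ᵥ x)) μ :=
  ((measurePreserving_vadd g μ).integrable_comp_emb (measurableEmbedding_const_vadd g)).mpr hf

variable [Fintype G]

variable (G) in
def orbitAverage (f : α → ℝ) (x : α) : ℝ :=
  (Fintype.card G : ℝ)⁻¹ * ∑ g : G, f (g +ᵥ x)

lemma orbitAverage_vadd (f : α → ℝ) (g : G) (x : α) :
    orbitAverage G f (g +ᵥ x) = orbitAverage G f x := by
  simp only [orbitAverage, vadd_vadd]
  congr 1
  exact Fintype.sum_equiv (Equiv.addRight g) _ _ fun _ => rfl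

lemma orbitAverage_neg (f : α → ℝ) (x : α) :
    orbitAverage G (fun y => -f y) x = -orbitAverage G f x := by
  simp [orbitAverage]

lemma orbitAverage_mul_sub_orbitAverage {c : α → ℝ} (hc : ∀ (g : G) x, c (g +ᵥ x) = c x)
    (f : α → ℝ) (x : α) :
    orbitAverage G (fun y => c y * (f y - orbitAverage G f y)) x = 0 := by
  have hcard : (Fintype.card G : ℝ) ≠ 0 := Nat.cast_ne_zero.mpr Fintype.card_ne_zero
  change (Fintype.card G : ℝ)⁻¹ * ∑ g : G, c (g +ᵥ x) * (f (g +ᵥ x) - orbitAverage G f (g +ᵥ x))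
    = 0
  simp only [hc, orbitAverage_vadd, ← Finset.mul_sum, Finset.sum_sub_distrib, Finset.sum_const,
    Finset.card_univ, nsmul_eq_mul]
  simp only [orbitAverage]
  field_simp
  ring

lemma ConvexOn.map_orbitAverage_le {Φ : ℝ → ℝ} (hΦ : ConvexOn ℝ Set.univ Φ) (f : α → ℝ)
    (x : α) : Φ (orbitAverage G f x) ≤ orbitAverage G (fun y => Φ (f y)) x := by
  have hcard : (Fintype.card G : ℝ) ≠ 0 := Nat.cast_ne_zero.mpr Fintype.card_ne_zero
  simpa [orbitAverage, Finset.mul_sum] using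
    hΦ.map_sum_le (t := Finset.univ) (w := fun _ : G => (Fintype.card G : ℝ)⁻¹)
      (p := fun g => f (g +ᵥ x)) (fun _ _ => by positivity) (by simp [hcard])
      (fun _ _ => Set.mem_univ _)

variable [MeasurableSpace α] [MeasurableConstVAdd G α] {μ : Measure α}
  [VAddInvariantMeasure G α μ]

lemma integrable_orbitAverage {f : α → ℝ} (hf : Integrable f μ) :
    Integrable (orbitAverage G f) μ :=
  (integrable_finsetSum _ fun g _ => hf.comp_vadd g).const_mul _

lemma integral_orbitAverage {f : α → ℝ} (hf : Integrable f μ) :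
    ∫ x, orbitAverage G f x ∂μ = ∫ x, f x ∂μ := by
  have hcard : (Fintype.card G : ℝ) ≠ 0 := Nat.cast_ne_zero.mpr Fintype.card_ne_zero
  simp only [orbitAverage]
  rw [integral_const_mul, integral_finsetSum _ fun g _ => hf.comp_vadd g]
  simp [integral_vadd_eq_self, hcard]

lemma integral_mul_sub_orbitAverage_eq_zero {c f : α → ℝ} (hc : ∀ (g : G) x, c (g +ᵥ x) = c x)
    (hint : Integrable (fun x => c x * (f x - orbitAverage G f x)) μ) :
    ∫ x, c x * (f x - orbitAverage G f x) ∂μ = 0 := by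
  rw [← integral_orbitAverage (G := G) hint]
  simp [orbitAverage_mul_sub_orbitAverage hc]

lemma integral_exp_neg_orbitAverage_le {U : α → ℝ} (hU : Integrable (fun x => Real.exp (-U x)) μ)
    (hAve : Integrable (fun x => Real.exp (-orbitAverage G U x)) μ) :
    ∫ x, Real.exp (-orbitAverage G U x) ∂μ ≤ ∫ x, Real.exp (-U x) ∂μ := by
  calc ∫ x, Real.exp (-orbitAverage G U x) ∂μ
      ≤ ∫ x, orbitAverage G (fun y => Real.exp (-U y)) x ∂μ := by
        refine integral_mono hAve (integrable_orbitAverage hU) fun x => ?_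
        simpa [orbitAverage_neg] using convexOn_exp.map_orbitAverage_le (G := G) (fun y => -U y) x
    _ = ∫ x, Real.exp (-U x) ∂μ := integral_orbitAverage hU

end OrbitAverage

lemma mul_log_div_inv_mul_exp_neg {p Z u : ℝ} (hp : 0 ≤ p) (hZ : 0 < Z) :
    p * Real.log (p / (Z⁻¹ * Real.exp (-u))) = p * Real.log p + p * u + p * Real.log Z := by
  rcases hp.eq_or_lt with rfl | hp
  · simp
  rw [Real.log_div hp.ne' (by positivity), Real.log_mul (by positivity) (Real.exp_ne_zero _),
    Real.log_inv, Real.log_exp]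
  ring

section Translation

variable {G : Type} [Fintype G] [AddCommGroup G]

lemma translateField_eq_piLpCongrLeft (τ : G) :
    translateField τ = ⇑(LinearIsometryEquiv.piLpCongrLeft 2 ℝ ℝ (Equiv.addRight τ)) := by
  funext φ
  ext n
  simp [translateField, toE, LinearIsometryEquiv.piLpCongrLeft_apply, Equiv.piCongrLeft'_apply,
    sub_eq_add_neg]

instance : AddAction G (E' G) where
  vadd := translateField
  zero_vadd φ := by
    ext n
    change φ (n - 0) = φ n
    rw [sub_zero]
  add_vadd τ σ φ := by
    ext n
    change φ (n - (τ + σ)) = φ (n - τ - σ)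
    rw [sub_sub]

instance : MeasurableConstVAdd G (E' G) where
  measurable_const_vadd τ := by
    change Measurable (translateField τ)
    rw [translateField_eq_piLpCongrLeft]
    exact (LinearIsometryEquiv.piLpCongrLeft 2 ℝ ℝ (Equiv.addRight τ)).continuous.measurable

instance : VAddInvariantMeasure G (E' G) volume where
  measure_preimage_vadd τ s hs := by
    change volume (translateField τ ⁻¹' s) = volume s
    rw [translateField_eq_piLpCongrLeft]
    exact (LinearIsometryEquiv.piLpCongrLeft 2 ℝ ℝ
      (Equiv.addRight τ)).measurePreserving.measure_preimage hs.nullMeasurableSet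

end Translation

theorem translation_averaging_decreases_KL_general {G : Type} [Fintype G] [AddCommGroup G]
    (p : E' G → ℝ) (hpd : IsDensity' p)
    (hstat : ∀ (τ : G) (φ : E' G), p (translateField τ φ) = p φ)
    (U : E' G → ℝ)
    (AveU : E' G → ℝ)
    (hAveU : ∀ φ, AveU φ = (Fintype.card G : ℝ)⁻¹ * ∑ τ : G, U (translateField τ φ))
    (Z Zt : ℝ)
    (hZ : Z = ∫ φ, Real.exp (-U φ)) (hZpos : 0 < Z)
    (hZt : Zt = ∫ φ, Real.exp (-AveU φ)) (hZtpos : 0 < Zt)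
    (q qt : E' G → ℝ)
    (hq : ∀ φ, q φ = Z⁻¹ * Real.exp (-U φ))
    (hqt : ∀ φ, qt φ = Zt⁻¹ * Real.exp (-AveU φ))
    -- sufficient integrability for the KL divergences:
    (hint1 : Integrable (fun φ => p φ * Real.log (p φ / q φ)))
    (hint2 : Integrable (fun φ => p φ * Real.log (p φ / qt φ)))
    (hintZ : Integrable (fun φ => Real.exp (-U φ)))
    (hintZt : Integrable (fun φ => Real.exp (-AveU φ))) :
    KL' p qt ≤ KL' p q := by
  obtain ⟨hp0, -, hp1⟩ := hpd
  have hpint : Integrable p := Integrable.of_integral_ne_zero (by simp [hp1])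
  obtain rfl : AveU = orbitAverage G U := funext hAveU
  have hZtZ : Zt ≤ Z := hZt ▸ hZ ▸ integral_exp_neg_orbitAverage_le hintZ hintZt
  have hterm : ∀ φ, p φ * Real.log (p φ / q φ) - p φ * Real.log (p φ / qt φ)
      = p φ * (U φ - orbitAverage G U φ) + p φ * (Real.log Z - Real.log Zt) := fun φ => by
    rw [hq, hqt, mul_log_div_inv_mul_exp_neg (hp0 φ) hZpos,
      mul_log_div_inv_mul_exp_neg (hp0 φ) hZtpos]
    ring
  have hcrossInt : Integrable fun φ => p φ * (U φ - orbitAverage G U φ) := by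
    refine ((hint1.sub hint2).sub (hpint.mul_const (Real.log Z - Real.log Zt))).congr
      (ae_of_all _ fun φ => ?_)
    simp only [Pi.sub_apply, hterm]
    ring
  have hcross : ∫ φ, p φ * (U φ - orbitAverage G U φ) = 0 :=
    integral_mul_sub_orbitAverage_eq_zero hstat hcrossInt
  have hKL : KL' p q - KL' p qt = Real.log Z - Real.log Zt := by
    rw [KL', KL', ← integral_sub hint1 hint2, integral_congr_ae (ae_of_all _ hterm),
      integral_add hcrossInt (hpint.mul_const _), hcross, integral_mul_const, hp1]
    ring
  linarith [Real.log_le_log hZtpos hZtZ]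

/-- translation averaging reduces the KL divergence: for a stationary
density `p`, if `q = Z⁻¹ e^{-U}` and `q̃ = Z̃⁻¹ e^{-Ave U}` with
`(Ave U)(φ) = |G|⁻¹ ∑_τ U(T_τ φ)`, then `KL(p‖q̃) ≤ KL(p‖q)`. -/
theorem translation_averaging_decreases_KL {G : Type} [Fintype G] [AddCommGroup G]
    (p : E' G → ℝ) (hpd : IsDensity' p)
    (hstat : ∀ (τ : G) (φ : E' G), p (translateField τ φ) = p φ)
    (U : E' G → ℝ) (hU : Measurable U)
    (AveU : E' G → ℝ)
    (hAveU : ∀ φ, AveU φ = (Fintype.card G : ℝ)⁻¹ * ∑ τ : G, U (translateField τ φ))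
    (Z Zt : ℝ)
    (hZ : Z = ∫ φ, Real.exp (-U φ)) (hZpos : 0 < Z)
    (hZt : Zt = ∫ φ, Real.exp (-AveU φ)) (hZtpos : 0 < Zt)
    (q qt : E' G → ℝ)
    (hq : ∀ φ, q φ = Z⁻¹ * Real.exp (-U φ))
    (hqt : ∀ φ, qt φ = Zt⁻¹ * Real.exp (-AveU φ))
    -- sufficient integrability for the KL divergences:
    (hint1 : Integrable (fun φ => p φ * Real.log (p φ / q φ)))
    (hint2 : Integrable (fun φ => p φ * Real.log (p φ / qt φ)))
    (hintZ : Integrable (fun φ => Real.exp (-U φ)))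
    (hintZt : Integrable (fun φ => Real.exp (-AveU φ))) :
    KL' p qt ≤ KL' p q :=
  translation_averaging_decreases_KL_general p hpd hstat U AveU hAveU Z Zt hZ hZpos hZt hZtpos q qt
    hq hqt hint1 hint2 hintZ hintZt

end
end

section
/- Conjugate mirror filters generate an orthogonal matrix: let g ∈ ℓ²(ℤ/Nℤ) (N even) satisfy |ĝ(ω)|² + |ĝ(ω+π)|² = 2 for all ω, and define ḡ(n) = (-1)^{1-n} g(1-n). Then the operator φ ↦ (Gφ, Ḡφ) with Gφ(n) = (φ*g)(2n) and Ḡφ(n) = (φ*ḡ)(2n) (circular convolution) is orthogonal from ℝ^N to ℝ^{N/2} × ℝ^{N/2}. -/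
/-!
Let `M` be the matrix with rows `g(2n - ·)` and `ḡ(2n - ·)`. The claim is `Mᵀ M = 1`, and as
`M` is square it suffices that its rows are orthonormal. The entries of `M Mᵀ` are correlations
`∑ u, f u * h (u + d)` at even shifts `d`. Sampling the hypothesis at `ω = 2πk/N` says that the
DFT `â` of the autocorrelation `a` of `g` satisfies `â k + â (k + N/2) = 2`; inverting the DFT
gives `(1 + (-1)^d) a d = 2 δ_d`, so `a` is a Kronecker delta at even shifts. Mirroring
multiplies the autocorrelation at `d` by `(-1)^d`, and at an even shift the correlation of `g`
with `ḡ` is its own negative under the substitution `u ↦ 1 - d - u`.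
-/

open Finset ZMod Matrix

namespace ConjugateMirrorFilter

variable {N : ℕ} [NeZero N] {R : Type*}

section Sign

variable [Ring R]

lemma neg_one_pow_val_add (hN : Even N) (x y : ZMod N) :
    (-1 : R) ^ (x + y).val = (-1) ^ x.val * (-1) ^ y.val := by
  rw [← pow_add, ZMod.val_add, neg_one_pow_eq_pow_mod_two,
    Nat.mod_mod_of_dvd _ (even_iff_two_dvd.mp hN), ← neg_one_pow_eq_pow_mod_two]

omit [NeZero N] in
lemma neg_one_pow_mul_self (n : ℕ) : (-1 : R) ^ n * (-1) ^ n = 1 := by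
  rw [← pow_add, ← two_mul, pow_mul, neg_one_sq, one_pow]

lemma neg_one_pow_val_two_mul (hN : Even N) (x : ZMod N) : (-1 : R) ^ (2 * x).val = 1 := by
  rw [two_mul, neg_one_pow_val_add hN, neg_one_pow_mul_self]

lemma neg_one_pow_val_neg (hN : Even N) (x : ZMod N) : (-1 : R) ^ (-x).val = (-1) ^ x.val := by
  have h := neg_one_pow_val_add (R := R) hN x (-x)
  rw [add_neg_cancel, ZMod.val_zero, pow_zero] at h
  calc (-1 : R) ^ (-x).val = (-1) ^ x.val * (-1) ^ x.val * (-1) ^ (-x).val := by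
        rw [neg_one_pow_mul_self, one_mul]
    _ = (-1) ^ x.val := by rw [mul_assoc, ← h, mul_one]

lemma neg_one_pow_val_one (hN : Even N) : (-1 : R) ^ (1 : ZMod N).val = -1 := by
  have : 1 < N := by obtain ⟨r, hr⟩ := hN; have := NeZero.ne N; omega
  rw [ZMod.val_one_eq_one_mod, Nat.mod_eq_of_lt this, pow_one]

end Sign

section Correlation

variable [CommRing R]

def crossCorr (f h : ZMod N → R) (d : ZMod N) : R := ∑ u, f u * h (u + d)

def mirror (g : ZMod N → R) (n : ZMod N) : R := (-1) ^ (1 - n).val * g (1 - n)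

lemma sum_mul_sub_eq_crossCorr (f h : ZMod N → R) (x y : ZMod N) :
    ∑ m, f (x - m) * h (y - m) = crossCorr f h (y - x) :=
  Fintype.sum_equiv (Equiv.subLeft x) _ _ fun m => by simp only [Equiv.subLeft_apply]; ring_nf

lemma crossCorr_comm (f h : ZMod N → R) (d : ZMod N) :
    crossCorr h f d = crossCorr f h (-d) :=
  Fintype.sum_equiv (Equiv.addRight d) _ _ fun u => by
    simp only [Equiv.coe_addRight, add_neg_cancel_right, mul_comm]

lemma crossCorr_mirror_mirror (hN : Even N) (g : ZMod N → R) (d : ZMod N) :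
    crossCorr (mirror g) (mirror g) d = (-1) ^ d.val * crossCorr g g d := by
  rw [crossCorr, crossCorr, mul_sum]
  refine Fintype.sum_equiv (Equiv.subLeft (1 - d)) _ _ fun u => ?_
  have h1 : 1 - (u + d) = 1 - d - u := by ring
  have h2 : 1 - d - u + d = 1 - u := by ring
  have hs : (-1 : R) ^ (1 - u).val = (-1) ^ (1 - d - u).val * (-1) ^ d.val := by
    rw [← neg_one_pow_val_add hN, h2]
  simp only [mirror, Equiv.subLeft_apply, h1, h2, hs]
  linear_combination (g (1 - u) * g (1 - d - u) * (-1) ^ d.val) *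
    neg_one_pow_mul_self (R := R) (1 - d - u).val

lemma crossCorr_mirror_eq_zero [IsDomain R] [CharZero R] (hN : Even N) (g : ZMod N → R)
    {d : ZMod N} (hd : (-1 : R) ^ d.val = 1) : crossCorr g (mirror g) d = 0 := by
  have hsign : ∀ u : ZMod N, (-1 : R) ^ (1 - d - u).val = -(-1) ^ u.val := fun u => by
    rw [sub_eq_add_neg, neg_one_pow_val_add hN, neg_one_pow_val_neg hN, sub_eq_add_neg,
      neg_one_pow_val_add hN, neg_one_pow_val_neg hN, neg_one_pow_val_one hN, hd]
    ring
  have hself : crossCorr g (mirror g) d = -crossCorr g (mirror g) d := by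
    rw [crossCorr, ← sum_neg_distrib]
    refine Fintype.sum_equiv (Equiv.subLeft (1 - d)) _ _ fun u => ?_
    have h1 : 1 - (u + d) = 1 - d - u := by ring
    have h2 : 1 - (1 - d - u + d) = u := by ring
    simp only [mirror, Equiv.subLeft_apply, h1, h2, hsign]
    ring
  exact self_eq_neg.mp hself

end Correlation

section Fourier

open Complex
open scoped Real ComplexConjugate

noncomputable def dtft (g : ZMod N → ℝ) (ω : ℝ) : ℂ :=
  ∑ n, (g n : ℂ) * exp (-I * (n.val : ℂ) * (ω : ℂ))

lemma dtft_eq_dft (g : ZMod N → ℝ) (k : ℕ) :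
    dtft g (2 * π * k / N) = 𝓕 (fun n => (g n : ℂ)) k := by
  refine sum_congr rfl fun n _ => ?_
  have : -(n * (k : ZMod N)) = ((-(n.val * k : ℕ) : ℤ) : ZMod N) := by simp
  rw [smul_eq_mul, this, stdAddChar_coe, mul_comm]
  congr 2
  push_cast
  ring

lemma dft_add_half (hN : Even N) (Φ : ZMod N → ℂ) (k : ZMod N) :
    𝓕 Φ (k + (N / 2 : ℕ)) = 𝓕 (fun d => (-1) ^ d.val * Φ d) k := by
  obtain ⟨r, hr⟩ := hN
  have hr0 : (r : ℂ) ≠ 0 := by have := NeZero.ne N; norm_cast; omega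
  refine sum_congr rfl fun d _ => ?_
  have hsign : stdAddChar (-(d * (r : ZMod N))) = (-1 : ℂ) ^ d.val := by
    have : -(d * (r : ZMod N)) = ((-(d.val * r : ℕ) : ℤ) : ZMod N) := by simp
    have harg :
        2 * π * I * ((-(d.val * r : ℕ) : ℤ) : ℂ) / (N : ℂ) = d.val * -(π * I) := by
      have hN' : (N : ℂ) = r + r := by exact_mod_cast hr
      rw [hN']; push_cast; field_simp; ring
    rw [this, stdAddChar_coe, harg, exp_nat_mul, exp_neg, exp_pi_mul_I, inv_neg, inv_one]
  rw [show N / 2 = r by omega, mul_add, neg_add, AddChar.map_add_eq_mul, hsign, smul_eq_mul,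
    smul_eq_mul]
  ring

lemma dft_crossCorr_self (g : ZMod N → ℝ) (k : ZMod N) :
    𝓕 (fun d => ((crossCorr g g d : ℝ) : ℂ)) k =
      (‖𝓕 (fun n => (g n : ℂ)) k‖ ^ 2 : ℝ) := by
  have hconj : conj (𝓕 (fun n => (g n : ℂ)) k) = ∑ u, stdAddChar (u * k) * g u := by
    simp only [dft_apply, map_sum, smul_eq_mul, map_mul, conj_ofReal, ← AddChar.map_neg_eq_conj,
      neg_neg]
  rw [Complex.sq_norm, ← Complex.mul_conj, mul_comm, hconj, dft_apply, dft_apply, sum_mul_sum]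
  simp only [crossCorr, ofReal_sum, ofReal_mul, smul_eq_mul, mul_sum]
  rw [sum_comm]
  refine sum_congr rfl fun u _ => Fintype.sum_equiv (Equiv.addLeft u) _ _ fun d => ?_
  have hchar : stdAddChar (-(d * k)) = stdAddChar (u * k) * stdAddChar (-((u + d) * k)) := by
    rw [← AddChar.map_add_eq_mul]; ring_nf
  rw [Equiv.coe_addLeft, hchar]
  ring

lemma dft_single_zero (c : ℂ) (k : ZMod N) : 𝓕 (Pi.single 0 c) k = c := by
  simp [dft_apply, Pi.single_apply]

lemma crossCorr_self_eq_ite (hN : Even N) (g : ZMod N → ℝ)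
    (hcmf : ∀ ω : ℝ, ‖dtft g ω‖ ^ 2 + ‖dtft g (ω + π)‖ ^ 2 = 2)
    {d : ZMod N} (hd : (-1 : ℝ) ^ d.val = 1) : crossCorr g g d = if d = 0 then 1 else 0 := by
  set A : ZMod N → ℂ := fun d => ((crossCorr g g d : ℝ) : ℂ)
  have hdft : 𝓕 (fun d => (1 + (-1) ^ d.val) * A d) = 𝓕 (Pi.single 0 2) := by
    ext k
    have hshift : 2 * π * k.val / N + π = 2 * π * ((k.val + N / 2 : ℕ) : ℝ) / N := by
      obtain ⟨r, hr⟩ := hN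
      have hN' : (N : ℝ) = r + r := by exact_mod_cast hr
      have hr0 : (r : ℝ) ≠ 0 := by have := NeZero.ne N; norm_cast; omega
      rw [show N / 2 = r by omega, hN']; push_cast; field_simp; ring
    have hk := hcmf (2 * π * k.val / N)
    rw [hshift, dtft_eq_dft, dtft_eq_dft, Nat.cast_add, natCast_zmod_val] at hk
    have hsplit : (fun d => (1 + (-1) ^ d.val) * A d) = A + fun d => (-1) ^ d.val * A d := by
      ext d; simp only [Pi.add_apply]; ring
    rw [hsplit, map_add, Pi.add_apply, ← dft_add_half hN, dft_crossCorr_self, dft_crossCorr_self,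
      ← ofReal_add, hk, dft_single_zero, ofReal_ofNat]
  have hd' := congrFun (dft.injective hdft) d
  simp only [A, Pi.single_apply] at hd'
  rw [show (-1 : ℂ) ^ d.val = 1 by exact_mod_cast hd] at hd'
  split_ifs at hd' ⊢ <;> norm_num at hd' <;> linarith

end Fourier

section FilterBank

def analysisMatrix (g h : ZMod N → R) : Matrix (Fin (N / 2) ⊕ Fin (N / 2)) (ZMod N) R :=
  Matrix.of <|
    Sum.elim (fun n m => g ((2 * n.val : ℕ) - m)) (fun n m => h ((2 * n.val : ℕ) - m))

omit [NeZero N] in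
lemma natCast_two_mul_sub_eq_zero_iff {n n' : Fin (N / 2)} :
    ((2 * n'.val : ℕ) : ZMod N) - (2 * n.val : ℕ) = 0 ↔ n = n' := by
  rw [sub_eq_zero, ZMod.natCast_eq_natCast_iff', Nat.mod_eq_of_lt (by omega),
    Nat.mod_eq_of_lt (by omega), eq_comm, Fin.ext_iff]
  omega

lemma neg_one_pow_val_natCast_two_mul_sub [Ring R] (hN : Even N) (a b : ℕ) :
    (-1 : R) ^ (((2 * a : ℕ) : ZMod N) - (2 * b : ℕ)).val = 1 := by
  rw [show ((2 * a : ℕ) : ZMod N) - (2 * b : ℕ) = 2 * ((a : ZMod N) - b) by push_cast; ring,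
    neg_one_pow_val_two_mul hN]

lemma analysisMatrix_mirror_mul_transpose (hN : Even N) (g : ZMod N → ℝ)
    (hcmf : ∀ ω : ℝ, ‖dtft g ω‖ ^ 2 + ‖dtft g (ω + Real.pi)‖ ^ 2 = 2) :
    analysisMatrix g (mirror g) * (analysisMatrix g (mirror g))ᵀ = 1 := by
  have hsign (n n' : Fin (N / 2)) := neg_one_pow_val_natCast_two_mul_sub (R := ℝ) hN n'.val n.val
  have hself (n n' : Fin (N / 2)) :
      crossCorr g g (((2 * n'.val : ℕ) : ZMod N) - (2 * n.val : ℕ)) =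
        if n = n' then 1 else 0 := by
    simp only [crossCorr_self_eq_ite hN g hcmf (hsign n n'), natCast_two_mul_sub_eq_zero_iff]
  ext (n | n) (n' | n') <;>
    simp only [mul_apply, transpose_apply, analysisMatrix, of_apply,
      Sum.elim_inl, Sum.elim_inr, sum_mul_sub_eq_crossCorr, one_apply, Sum.inl.injEq,
      Sum.inr.injEq, reduceCtorEq, if_false]
  · exact hself n n'
  · exact crossCorr_mirror_eq_zero hN g (hsign n n')
  · rw [crossCorr_comm, neg_sub]
    exact crossCorr_mirror_eq_zero hN g (hsign n' n)
  · rw [crossCorr_mirror_mirror hN, hsign, one_mul]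
    exact hself n n'

end FilterBank

end ConjugateMirrorFilter

open ConjugateMirrorFilter

/-- conjugate mirror filters generate an orthogonal matrix: if
`g ∈ ℓ²(ℤ/Nℤ)` (`N` even) satisfies `|gHat(ω)|² + |gHat(ω+π)|² = 2` for all `ω`, and
`ḡ(n) = (-1)^{1-n} g(1-n)`, then `φ ↦ (Gφ, Ḡφ)` with `Gφ(n) = (φ*g)(2n)` and
`Ḡφ(n) = (φ*ḡ)(2n)` (circular convolution) is orthogonal from `ℝ^N` to
`ℝ^{N/2} × ℝ^{N/2}`, i.e. it preserves inner products. -/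
theorem conjugate_mirror_filters_orthogonal (N : ℕ) [NeZero N] (hN : Even N)
    (g : ZMod N → ℝ)
    (gHat : ℝ → ℂ)
    (hgHat : ∀ ω : ℝ, gHat ω = ∑ n : ZMod N, (g n : ℂ) * Complex.exp (-Complex.I * (n.val : ℂ) * (ω : ℂ)))
    (hcmf : ∀ ω : ℝ, ‖gHat ω‖ ^ 2 + ‖gHat (ω + Real.pi)‖ ^ 2 = 2)
    (gb : ZMod N → ℝ)
    (hgb : ∀ n : ZMod N, gb n = (-1 : ℝ) ^ ((1 - n : ZMod N).val) * g (1 - n))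
    (Gop Gbop : (ZMod N → ℝ) → Fin (N / 2) → ℝ)
    (hG : ∀ (φ : ZMod N → ℝ) (n : Fin (N / 2)),
      Gop φ n = ∑ m : ZMod N, φ m * g (((2 * n.val : ℕ) : ZMod N) - m))
    (hGb : ∀ (φ : ZMod N → ℝ) (n : Fin (N / 2)),
      Gbop φ n = ∑ m : ZMod N, φ m * gb (((2 * n.val : ℕ) : ZMod N) - m)) :
    ∀ φ ψ : ZMod N → ℝ,
      (∑ n, Gop φ n * Gop ψ n) + (∑ n, Gbop φ n * Gbop ψ n) = ∑ m, φ m * ψ m := by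
  intro φ ψ
  obtain rfl : gHat = dtft g := funext hgHat
  obtain rfl : gb = mirror g := funext hgb
  set M := analysisMatrix g (mirror g)
  have hcard : Fintype.card (Fin (N / 2) ⊕ Fin (N / 2)) = Fintype.card (ZMod N) := by
    simp only [Fintype.card_sum, Fintype.card_fin, ZMod.card]
    have := even_iff_two_dvd.mp hN; omega
  have hMtM : Mᵀ * M = 1 := (mul_eq_one_comm_of_equiv (Fintype.equivOfCardEq hcard)).mp
    (analysisMatrix_mirror_mul_transpose hN g hcmf)
  calc (∑ n, Gop φ n * Gop ψ n) + (∑ n, Gbop φ n * Gbop ψ n)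
        = (M *ᵥ φ) ⬝ᵥ (M *ᵥ ψ) := by
        simp only [dotProduct, Fintype.sum_sum_type, mulVec, M, analysisMatrix,
          of_apply, Sum.elim_inl, Sum.elim_inr, hG, hGb, mul_comm]
    _ = ∑ m, φ m * ψ m := by
        rw [dotProduct_mulVec, vecMul_mulVec, hMtM, vecMul_one, dotProduct]
end
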